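/- Let x₁,…,xₙ and y₁,…,yₘ be points in ℝᵈ with empirical measures μ̂ₙ = (1/n)∑ᵢ δ_{xᵢ} and ν̂ₘ = (1/m)∑ⱼ δ_{yⱼ}, let 1 ≤ k ≤ d, and define F : ℝ^{d×k} → ℝ by F(A) = W(A#μ̂ₙ, A#ν̂ₘ) and, for λ > 0, F_λ(A) = F(A) − (λ/2)‖AᵀA − I_k‖_F². Let F* = max{F(A) : AᵀA = I_k} and F*_λ = sup_{A ∈ ℝ^{d×k}} F_λ(A). Then there exist constants C > 0 and λ₀ > 0 such that for every λ ≥ λ₀: (i) |F* − F*_λ| ≤ C/λ, and (ii) every maximizer A*_λ of F_λ satisfies ‖(A*_λ)ᵀ A*_λ − I_k‖_F ≤ C/λ. -/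

import Mathlib

open MeasureTheory
open scoped ENNReal BigOperators

noncomputable section

/-- Euclidean space `ℝ^d`. -/
abbrev Euc (d : ℕ) : Type := EuclideanSpace ℝ (Fin d)

/-- The 1-Wasserstein distance with Euclidean cost:
infimum over couplings `π` of `μ` and `ν` of `∫ ‖u - v‖₂ dπ(u,v)`. -/
noncomputable def Wass {k : ℕ} (μ ν : Measure (Euc k)) : ℝ :=
  sInf { c : ℝ | ∃ π : Measure (Euc k × Euc k), IsProbabilityMeasure π ∧
      π.map Prod.fst = μ ∧ π.map Prod.snd = ν ∧ c = ∫ p, dist p.1 p.2 ∂π }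

/-- The projection `z ↦ Aᵀ z` of `ℝ^d` onto `ℝ^k`. -/
noncomputable def proj {d k : ℕ} (A : Matrix (Fin d) (Fin k) ℝ) (z : Euc d) : Euc k :=
  (EuclideanSpace.equiv (Fin k) ℝ).symm (A.transpose.mulVec (EuclideanSpace.equiv (Fin d) ℝ z))

/-- The projected Wasserstein distance of order `k`:
supremum over matrices `A ∈ ℝ^{d×k}` with `AᵀA = I_k` of `W(A#μ, A#ν)`. -/
noncomputable def PW {d : ℕ} (k : ℕ) (μ ν : Measure (Euc d)) : ℝ :=
  sSup { c : ℝ | ∃ A : Matrix (Fin d) (Fin k) ℝ, A.transpose * A = 1 ∧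
      c = Wass (μ.map (proj A)) (ν.map (proj A)) }

/-- Empirical measure `(1/n) ∑ᵢ δ_{x i}`. -/
noncomputable def emp {α : Type*} [MeasurableSpace α] {n : ℕ} (x : Fin n → α) : Measure α :=
  (n : ℝ≥0∞)⁻¹ • ∑ i : Fin n, Measure.dirac (x i)

/-- Integral probability metric associated with a function class `F`. -/
noncomputable def IPM {α : Type*} [MeasurableSpace α] (F : Set (α → ℝ)) (μ ν : Measure α) : ℝ :=
  sSup { c : ℝ | ∃ f ∈ F, c = (∫ z, f z ∂μ) - ∫ z, f z ∂ν }

/-- The Rademacher (symmetric ±1) distribution on `ℝ`. -/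
noncomputable def signMeasure : Measure ℝ :=
  (2 : ℝ≥0∞)⁻¹ • Measure.dirac 1 + (2 : ℝ≥0∞)⁻¹ • Measure.dirac (-1)

/-- Rademacher complexity `ℜₙ(F, μ) = E[ sup_{f ∈ F} | (1/n) ∑ σᵢ f(xᵢ) | ]`. -/
noncomputable def rad {α : Type*} [MeasurableSpace α] (F : Set (α → ℝ)) (μ : Measure α)
    (n : ℕ) : ℝ :=
  ∫ p : (Fin n → α) × (Fin n → ℝ),
    sSup { c : ℝ | ∃ f ∈ F, c = |(n : ℝ)⁻¹ * ∑ i : Fin n, p.2 i * f (p.1 i)| }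
    ∂((Measure.pi fun _ : Fin n => μ).prod (Measure.pi fun _ : Fin n => signMeasure))

/-- Topological support of a measure. -/
def msupport {α : Type*} [TopologicalSpace α] [MeasurableSpace α] (μ : Measure α) : Set α :=
  { x | ∀ U ∈ nhds x, μ U ≠ 0 }

end

/-- Frobenius norm of a square matrix. -/
noncomputable def frobNorm {k : ℕ} (M : Matrix (Fin k) (Fin k) ℝ) : ℝ :=
  Real.sqrt (∑ i : Fin k, ∑ j : Fin k, (M i j) ^ 2)

/-- The objective `F(A) = W(A#μ̂ₙ, A#ν̂ₘ)`. -/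
noncomputable def Fobj {d k n m : ℕ} (x : Fin n → Euc d) (y : Fin m → Euc d)
    (A : Matrix (Fin d) (Fin k) ℝ) : ℝ :=
  Wass ((emp x).map (proj A)) ((emp y).map (proj A))

/-- The penalized objective `F_λ(A) = F(A) - (λ/2)‖AᵀA - I‖_F²`. -/
noncomputable def Fpen {d k n m : ℕ} (x : Fin n → Euc d) (y : Fin m → Euc d) (lam : ℝ)
    (A : Matrix (Fin d) (Fin k) ℝ) : ℝ :=
  Fobj x y A - lam / 2 * frobNorm (A.transpose * A - 1) ^ 2

-- auxiliary
namespace Stmt1Aux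
open Matrix

noncomputable def mve {a b : ℕ} (M : Matrix (Fin a) (Fin b) ℝ) (w : Euc b) : Euc a :=
  (EuclideanSpace.equiv (Fin a) ℝ).symm (M.mulVec (EuclideanSpace.equiv (Fin b) ℝ w))

lemma proj_eq_mve {d k : ℕ} (A : Matrix (Fin d) (Fin k) ℝ) : proj A = mve A.transpose := rfl

lemma mve_apply {a b : ℕ} (M : Matrix (Fin a) (Fin b) ℝ) (w : Euc b) (i : Fin a) :
    mve M w i = M.mulVec w i := rfl

lemma continuous_mve {a b : ℕ} (M : Matrix (Fin a) (Fin b) ℝ) : Continuous (mve M) := by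
  have h1 : Continuous fun v : Fin b → ℝ => M.mulVec v := by
    apply continuous_pi
    intro i
    simpa [Matrix.mulVec, dotProduct] using
      continuous_finset_sum Finset.univ fun j _ => continuous_const.mul (continuous_apply j)
  exact ((EuclideanSpace.equiv (Fin a) ℝ).symm.continuous).comp
    (h1.comp (EuclideanSpace.equiv (Fin b) ℝ).continuous)

lemma mve_sub {a b : ℕ} (M : Matrix (Fin a) (Fin b) ℝ) (u v : Euc b) :
    mve M u - mve M v = mve M (u - v) := by
  ext i
  simp only [mve_apply]
  show M.mulVec u i - M.mulVec v i = M.mulVec (u - v) i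
  rw [Matrix.mulVec_sub]
  rfl


lemma mve_mve {a b c : ℕ} (M : Matrix (Fin a) (Fin b) ℝ) (N : Matrix (Fin b) (Fin c) ℝ)
    (w : Euc c) : mve M (mve N w) = mve (M * N) w := by
  ext i
  simp only [mve_apply]
  show M.mulVec (N.mulVec w) i = (M * N).mulVec w i
  rw [Matrix.mulVec_mulVec]

lemma mve_one {a : ℕ} (w : Euc a) : mve 1 w = w := by
  ext i
  simp only [mve_apply]
  show (1 : Matrix (Fin a) (Fin a) ℝ).mulVec w i = w i
  rw [Matrix.one_mulVec]

lemma mve_add_left {a b : ℕ} (M N : Matrix (Fin a) (Fin b) ℝ) (w : Euc b) :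
    mve (M + N) w = mve M w + mve N w := by
  ext i
  simp only [mve_apply]
  show (M + N).mulVec w i = M.mulVec w i + N.mulVec w i
  rw [Matrix.add_mulVec]
  rfl

/-- Cauchy–Schwarz bound, coordinates. -/
lemma sum_sq_mulVec_le {a b : ℕ} (M : Matrix (Fin a) (Fin b) ℝ) (w : Fin b → ℝ) :
    ∑ i, (M.mulVec w i) ^ 2 ≤ (∑ i, ∑ j, M i j ^ 2) * ∑ j, w j ^ 2 := by
  rw [Finset.sum_mul]
  apply Finset.sum_le_sum
  intro i _
  simpa [Matrix.mulVec, dotProduct] using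
    Finset.sum_mul_sq_le_sq_mul_sq Finset.univ (fun j => M i j) w

lemma norm_mve_le {a b : ℕ} (M : Matrix (Fin a) (Fin b) ℝ) (w : Euc b) :
    ‖mve M w‖ ≤ Real.sqrt (∑ i, ∑ j, M i j ^ 2) * ‖w‖ := by
  rw [EuclideanSpace.norm_eq, EuclideanSpace.norm_eq,
    ← Real.sqrt_mul (by positivity) (∑ i, ‖w i‖ ^ 2)]
  apply Real.sqrt_le_sqrt
  have h := sum_sq_mulVec_le M (fun j => w j)
  simpa [mve_apply, Real.norm_eq_abs, sq_abs] using h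

lemma abs_dot_le {a : ℕ} (u v : Fin a → ℝ) :
    |∑ i, u i * v i| ≤ Real.sqrt (∑ i, u i ^ 2) * Real.sqrt (∑ i, v i ^ 2) := by
  rw [← Real.sqrt_sq_eq_abs, ← Real.sqrt_mul (by positivity)]
  exact Real.sqrt_le_sqrt (Finset.sum_mul_sq_le_sq_mul_sq _ _ _)

lemma frobNorm_nonneg {a : ℕ} (M : Matrix (Fin a) (Fin a) ℝ) : 0 ≤ frobNorm M :=
  Real.sqrt_nonneg _

lemma dot_mulVec_le {a : ℕ} (M : Matrix (Fin a) (Fin a) ℝ) (z : Fin a → ℝ) :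
    |∑ i, z i * (M *ᵥ z) i| ≤ frobNorm M * ∑ i, z i ^ 2 := by
  calc |∑ i, z i * (M *ᵥ z) i|
      ≤ Real.sqrt (∑ i, z i ^ 2) * Real.sqrt (∑ i, (M *ᵥ z) i ^ 2) := abs_dot_le _ _
    _ ≤ Real.sqrt (∑ i, z i ^ 2) * (frobNorm M * Real.sqrt (∑ i, z i ^ 2)) := by
        apply mul_le_mul_of_nonneg_left _ (Real.sqrt_nonneg _)
        rw [frobNorm, ← Real.sqrt_mul (by positivity)]
        exact Real.sqrt_le_sqrt (sum_sq_mulVec_le M z)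
    _ = frobNorm M * (Real.sqrt (∑ i, z i ^ 2) * Real.sqrt (∑ i, z i ^ 2)) := by ring
    _ = frobNorm M * ∑ i, z i ^ 2 := by
        rw [Real.mul_self_sqrt (by positivity)]

lemma sum_sq_pos {a : ℕ} {z : Fin a → ℝ} (hz : z ≠ 0) : 0 < ∑ i, z i ^ 2 := by
  have : ∃ i, z i ≠ 0 := by
    by_contra h; push_neg at h; exact hz (funext h)
  obtain ⟨i, hi⟩ := this
  exact Finset.sum_pos' (fun j _ => sq_nonneg _) ⟨i, Finset.mem_univ i, by positivity⟩

lemma posDef_of_frob_lt_one {a : ℕ} {G : Matrix (Fin a) (Fin a) ℝ} (hG : G.PosSemidef)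
    (ht : frobNorm (G - 1) < 1) : G.PosDef := by
  refine Matrix.PosDef.of_dotProduct_mulVec_pos hG.1 fun z hz => ?_
  have hz2 : 0 < ∑ i, z i ^ 2 := sum_sq_pos hz
  have hGz : G *ᵥ z = z + (G - 1) *ᵥ z := by
    rw [Matrix.sub_mulVec, Matrix.one_mulVec]; abel
  have hsplit : star z ⬝ᵥ G *ᵥ z = (∑ i, z i ^ 2) + ∑ i, z i * ((G - 1) *ᵥ z) i := by
    simp only [star_trivial, hGz, dotProduct, Pi.add_apply]
    rw [← Finset.sum_add_distrib]
    congr 1; funext i; ring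
  have hb := (abs_le.mp (dot_mulVec_le (G - 1) z)).1
  rw [hsplit]
  nlinarith [frobNorm_nonneg (G - 1)]

lemma posDef_add_one {a : ℕ} {S : Matrix (Fin a) (Fin a) ℝ} (hS : S.PosSemidef) :
    (S + 1).PosDef := by
  refine Matrix.PosDef.of_dotProduct_mulVec_pos (hS.1.add Matrix.isHermitian_one) fun z hz => ?_
  have h1 := hS.dotProduct_mulVec_nonneg z
  have hsplit : star z ⬝ᵥ (S + 1) *ᵥ z = (star z ⬝ᵥ S *ᵥ z) + ∑ i, z i ^ 2 := by
    simp only [star_trivial, Matrix.add_mulVec, Matrix.one_mulVec, dotProduct,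
      Pi.add_apply]
    rw [← Finset.sum_add_distrib]
    congr 1; funext i; ring
  rw [hsplit]
  simp only [star_trivial]
  have := sum_sq_pos hz
  simp only [star_trivial] at h1
  linarith

lemma shrink {a : ℕ} {S : Matrix (Fin a) (Fin a) ℝ} (hS : S.PosSemidef) (w : Euc a) :
    ‖mve (S - 1) w‖ ≤ frobNorm (S * S - 1) * ‖w‖ := by
  have hT : (S + 1).PosDef := posDef_add_one hS
  have hdet : IsUnit (S + 1).det := isUnit_iff_ne_zero.mpr (ne_of_gt hT.det_pos)
  set v := mve (S + 1)⁻¹ w with hv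
  have hwv : mve (S + 1) v = w := by
    rw [hv, mve_mve, Matrix.mul_nonsing_inv _ hdet, mve_one]
  have h1 : mve (S - 1) w = mve (S * S - 1) v := by
    rw [← hwv, mve_mve]
    congr 1
    · noncomm_ring
  have hSv : mve (S + 1) v = mve S v + v := by rw [mve_add_left, mve_one]
  have hinner : 0 ≤ inner (𝕜 := ℝ) (mve S v) v := by
    have h2 := hS.dotProduct_mulVec_nonneg v.ofLp
    simp only [star_trivial, dotProduct] at h2
    simp only [PiLp.inner_apply, RCLike.inner_apply, conj_trivial, mve_apply]
    calc (0:ℝ) ≤ ∑ i, v i * (S *ᵥ v) i := h2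
      _ = ∑ i, v i * (S *ᵥ v) i := rfl
  have hvw : ‖v‖ ≤ ‖w‖ := by
    have hn : ‖w‖ ^ 2 = ‖mve S v‖ ^ 2 + 2 * inner (𝕜 := ℝ) (mve S v) v + ‖v‖ ^ 2 := by
      rw [← hwv, hSv]; exact norm_add_sq_real _ _
    nlinarith [norm_nonneg (mve S v), norm_nonneg v, norm_nonneg w]
  calc ‖mve (S - 1) w‖ = ‖mve (S * S - 1) v‖ := by rw [h1]
    _ ≤ Real.sqrt (∑ i, ∑ j, (S * S - 1) i j ^ 2) * ‖v‖ := norm_mve_le _ _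
    _ ≤ frobNorm (S * S - 1) * ‖w‖ :=
        mul_le_mul_of_nonneg_left hvw (Real.sqrt_nonneg _)

lemma mve_lip {a : ℕ} {S : Matrix (Fin a) (Fin a) ℝ} (hS : S.PosSemidef) (u v : Euc a) :
    dist (mve S u) (mve S v) ≤ (1 + frobNorm (S * S - 1)) * dist u v := by
  rw [dist_eq_norm, dist_eq_norm, mve_sub]
  have hdecomp : mve S (u - v) = (u - v) + mve (S - 1) (u - v) := by
    have h := mve_add_left 1 (S - 1) (u - v)
    rw [add_sub_cancel] at h
    rw [h, mve_one]
  calc ‖mve S (u - v)‖ = ‖(u - v) + mve (S - 1) (u - v)‖ := by rw [hdecomp]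
    _ ≤ ‖u - v‖ + ‖mve (S - 1) (u - v)‖ := norm_add_le _ _
    _ ≤ ‖u - v‖ + frobNorm (S * S - 1) * ‖u - v‖ := by linarith [shrink hS (u - v)]
    _ = (1 + frobNorm (S * S - 1)) * ‖u - v‖ := by ring

lemma sum_sq_eq_trace {d k : ℕ} (A : Matrix (Fin d) (Fin k) ℝ) :
    ∑ i, ∑ j, A i j ^ 2 = (A.transpose * A).trace := by
  rw [Matrix.trace]
  rw [Finset.sum_comm]
  apply Finset.sum_congr rfl
  intro j _
  simp [Matrix.diag, Matrix.mul_apply, Matrix.transpose_apply, sq]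

lemma trace_le_frob {k : ℕ} (M : Matrix (Fin k) (Fin k) ℝ) :
    M.trace ≤ Real.sqrt k * frobNorm M := by
  have h1 : M.trace ≤ |∑ j, M j j| := le_abs_self _
  have h2 : |∑ j, (1:ℝ) * M j j| ≤ Real.sqrt (∑ _j : Fin k, (1:ℝ) ^ 2) *
      Real.sqrt (∑ j, M j j ^ 2) := abs_dot_le _ _
  have h3 : Real.sqrt (∑ _j : Fin k, (1:ℝ) ^ 2) = Real.sqrt k := by
    congr 1; simp
  have h4 : Real.sqrt (∑ j, M j j ^ 2) ≤ frobNorm M := by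
    apply Real.sqrt_le_sqrt
    apply Finset.sum_le_sum
    intro j _
    exact Finset.single_le_sum (f := fun i => M j i ^ 2) (fun i _ => sq_nonneg _)
      (Finset.mem_univ j)
  simp only [one_mul] at h2
  rw [h3] at h2
  calc M.trace ≤ |∑ j, M j j| := h1
    _ ≤ Real.sqrt k * Real.sqrt (∑ j, M j j ^ 2) := h2
    _ ≤ Real.sqrt k * frobNorm M :=
        mul_le_mul_of_nonneg_left h4 (Real.sqrt_nonneg _)

lemma frobA_le {d k : ℕ} (hk : 1 ≤ k) (A : Matrix (Fin d) (Fin k) ℝ) :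
    Real.sqrt (∑ i, ∑ j, A i j ^ 2) ≤
      Real.sqrt k * (1 + frobNorm (A.transpose * A - 1)) := by
  set t := frobNorm (A.transpose * A - 1) with hts
  have ht0 : 0 ≤ t := frobNorm_nonneg _
  have htr : (A.transpose * A).trace ≤ k + Real.sqrt k * t := by
    have : (A.transpose * A).trace = (A.transpose * A - 1).trace + k := by
      rw [Matrix.trace_sub, Matrix.trace_one]
      simp
    rw [this]
    have := trace_le_frob (A.transpose * A - 1)
    linarith
  have hk1 : (1:ℝ) ≤ k := by exact_mod_cast hk
  have hsk : Real.sqrt k * t ≤ k * t := by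
    apply mul_le_mul_of_nonneg_right _ ht0
    calc Real.sqrt (k:ℝ) ≤ Real.sqrt ((k:ℝ)^2) := Real.sqrt_le_sqrt (by nlinarith)
      _ = k := Real.sqrt_sq (by linarith)
  calc Real.sqrt (∑ i, ∑ j, A i j ^ 2) = Real.sqrt ((A.transpose * A).trace) := by
        rw [sum_sq_eq_trace]
    _ ≤ Real.sqrt ((k:ℝ) * (1 + t)^2) := by
        apply Real.sqrt_le_sqrt
        nlinarith [mul_nonneg (by linarith : (0:ℝ) ≤ (k:ℝ)) ht0,
          mul_nonneg (mul_nonneg (by linarith : (0:ℝ) ≤ (k:ℝ)) ht0) ht0]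
    _ = Real.sqrt k * (1 + t) := by
        rw [Real.sqrt_mul (by linarith), Real.sqrt_sq (by linarith)]

lemma frob_orth {d k : ℕ} {A : Matrix (Fin d) (Fin k) ℝ} (hA : A.transpose * A = 1) :
    Real.sqrt (∑ i, ∑ j, A i j ^ 2) = Real.sqrt k := by
  rw [sum_sq_eq_trace, hA, Matrix.trace_one]
  simp

/-- existence of an orthonormal `d × k` matrix when `k ≤ d`. -/
lemma exists_orth {d k : ℕ} (hkd : k ≤ d) :
    ∃ B : Matrix (Fin d) (Fin k) ℝ, B.transpose * B = 1 := by
  refine ⟨Matrix.of fun i j => if i = Fin.castLE hkd j then (1:ℝ) else 0, ?_⟩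
  ext a b
  simp only [Matrix.mul_apply, Matrix.transpose_apply, Matrix.of_apply]
  rw [Finset.sum_eq_single (Fin.castLE hkd a)]
  · by_cases h : a = b
    · subst h; simp [Matrix.one_apply]
    · have : Fin.castLE hkd a ≠ Fin.castLE hkd b := by
        simpa [Fin.castLE_inj] using h
      simp [Matrix.one_apply, h, this]
  · intro i _ hi
    simp [hi]
  · simp

section MeasureAux
variable {α β : Type*} [MeasurableSpace α] [MeasurableSpace β] {n m : ℕ}

lemma emp_univ (hn : 1 ≤ n) (x : Fin n → α) : emp x Set.univ = 1 := by
  rw [emp, Measure.smul_apply, Measure.finset_sum_apply]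
  simp only [Measure.dirac_apply_of_mem (Set.mem_univ _)]
  rw [Finset.sum_const, Finset.card_univ, Fintype.card_fin, nsmul_eq_mul, mul_one,
    smul_eq_mul]
  exact ENNReal.inv_mul_cancel (by exact_mod_cast (Nat.pos_of_ne_zero (by omega)).ne')
    (ENNReal.natCast_ne_top n)

lemma emp_prob (hn : 1 ≤ n) (x : Fin n → α) : IsProbabilityMeasure (emp x) :=
  ⟨emp_univ hn x⟩

lemma emp_map (x : Fin n → α) {f : α → β} (hf : Measurable f) :
    (emp x).map f = emp (f ∘ x) := by
  rw [emp, emp, Measure.map_smul]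
  congr 1
  ext s hs
  rw [Measure.map_apply hf hs, Measure.finset_sum_apply, Measure.finset_sum_apply]
  apply Finset.sum_congr rfl
  intro i _
  rw [Measure.dirac_apply' _ (hf hs), Measure.dirac_apply' _ hs]
  by_cases hmem : f (x i) ∈ s
  · simp [Set.indicator_apply, hmem]
  · simp [Set.indicator_apply, hmem]

lemma emp_null (x : Fin n → α) {s : Set α} (hs : MeasurableSet s)
    (h : ∀ i, x i ∉ s) : emp x s = 0 := by
  rw [emp, Measure.smul_apply, Measure.finset_sum_apply]
  have : ∀ i : Fin n, Measure.dirac (x i) s = 0 := by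
    intro i
    rw [Measure.dirac_apply' _ hs]
    simp [Set.indicator_apply, h i]
  simp [this]

end MeasureAux

section WassAux
variable {k n m : ℕ}

lemma measurableSet_range_compl {k : ℕ} {n : ℕ} (u : Fin n → Euc k) :
    MeasurableSet (Set.range u)ᶜ :=
  ((Set.finite_range u).isClosed.measurableSet).compl

lemma coupling_ae (u : Fin n → Euc k) (v : Fin m → Euc k)
    {π : Measure (Euc k × Euc k)}
    (h1 : π.map Prod.fst = emp u) (h2 : π.map Prod.snd = emp v) :
    ∀ᵐ p ∂π, (∃ i, p.1 = u i) ∧ (∃ j, p.2 = v j) := by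
  have hu : π {p : Euc k × Euc k | p.1 ∉ Set.range u} = 0 := by
    have : {p : Euc k × Euc k | p.1 ∉ Set.range u} = Prod.fst ⁻¹' (Set.range u)ᶜ := rfl
    rw [this, ← Measure.map_apply measurable_fst (measurableSet_range_compl u), h1]
    exact emp_null u (measurableSet_range_compl u) (by simp)
  have hv : π {p : Euc k × Euc k | p.2 ∉ Set.range v} = 0 := by
    have : {p : Euc k × Euc k | p.2 ∉ Set.range v} = Prod.snd ⁻¹' (Set.range v)ᶜ := rfl
    rw [this, ← Measure.map_apply measurable_snd (measurableSet_range_compl v), h2]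
    exact emp_null v (measurableSet_range_compl v) (by simp)
  have h3 : ∀ᵐ p ∂π, p.1 ∈ Set.range u := by
    rw [MeasureTheory.ae_iff]; exact hu
  have h4 : ∀ᵐ p ∂π, p.2 ∈ Set.range v := by
    rw [MeasureTheory.ae_iff]; exact hv
  filter_upwards [h3, h4] with p hp3 hp4
  exact ⟨hp3.imp fun i hi => hi.symm, hp4.imp fun j hj => hj.symm⟩

lemma wass_nonneg (μ ν : Measure (Euc k)) : 0 ≤ Wass μ ν := by
  apply Real.sInf_nonneg
  rintro c ⟨π, hπ, h1, h2, rfl⟩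
  exact integral_nonneg fun p => dist_nonneg

lemma wass_bddBelow (μ ν : Measure (Euc k)) :
    BddBelow { c : ℝ | ∃ π : Measure (Euc k × Euc k), IsProbabilityMeasure π ∧
      π.map Prod.fst = μ ∧ π.map Prod.snd = ν ∧ c = ∫ p, dist p.1 p.2 ∂π } := by
  refine ⟨0, ?_⟩
  rintro c ⟨π, hπ, h1, h2, rfl⟩
  exact integral_nonneg fun p => dist_nonneg

lemma prod_coupling_mem (μ ν : Measure (Euc k)) [IsProbabilityMeasure μ]
    [IsProbabilityMeasure ν] :
    (∫ p, dist p.1 p.2 ∂(μ.prod ν)) ∈ { c : ℝ | ∃ π : Measure (Euc k × Euc k),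
      IsProbabilityMeasure π ∧ π.map Prod.fst = μ ∧ π.map Prod.snd = ν ∧
      c = ∫ p, dist p.1 p.2 ∂π } := by
  refine ⟨μ.prod ν, inferInstance, ?_, ?_, rfl⟩
  · rw [Measure.map_fst_prod]; simp
  · rw [Measure.map_snd_prod]; simp

end WassAux

section WassMain
variable {k n m : ℕ}

lemma pair_le_sum (u : Fin n → Euc k) (v : Fin m → Euc k) (i : Fin n) (j : Fin m) :
    dist (u i) (v j) ≤ ∑ i', ∑ j', dist (u i') (v j') := by
  calc dist (u i) (v j) ≤ ∑ j', dist (u i) (v j') :=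
        Finset.single_le_sum (f := fun j' => dist (u i) (v j')) (fun _ _ => dist_nonneg)
          (Finset.mem_univ j)
    _ ≤ ∑ i', ∑ j', dist (u i') (v j') :=
        Finset.single_le_sum (f := fun i' => ∑ j', dist (u i') (v j'))
          (fun _ _ => Finset.sum_nonneg fun _ _ => dist_nonneg) (Finset.mem_univ i)

lemma integrable_dist_coupling (u : Fin n → Euc k) (v : Fin m → Euc k)
    {π : Measure (Euc k × Euc k)} [IsProbabilityMeasure π]
    (h1 : π.map Prod.fst = emp u) (h2 : π.map Prod.snd = emp v)
    {g : Euc k × Euc k → ℝ} (hg : Continuous g) (hg0 : ∀ p, 0 ≤ g p)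
    {c : ℝ} (hc : ∀ i j, g (u i, v j) ≤ c) :
    Integrable g π ∧ ∫ p, g p ∂π ≤ c := by
  have hae : ∀ᵐ p ∂π, g p ≤ c := by
    filter_upwards [coupling_ae u v h1 h2] with p hp
    obtain ⟨⟨i, hi⟩, ⟨j, hj⟩⟩ := hp
    have : p = (u i, v j) := by rw [← hi, ← hj]
    rw [this]
    exact hc i j
  have hint : Integrable g π := by
    refine ⟨hg.aestronglyMeasurable, HasFiniteIntegral.of_bounded (C := c) ?_⟩
    filter_upwards [hae] with p hp
    rwa [Real.norm_of_nonneg (hg0 p)]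
  refine ⟨hint, ?_⟩
  calc ∫ p, g p ∂π ≤ ∫ _p, c ∂π := integral_mono_ae hint (integrable_const c) hae
    _ = c := by simp

lemma wass_emp_le_bound (hn : 1 ≤ n) (hm : 1 ≤ m) (u : Fin n → Euc k) (v : Fin m → Euc k)
    {c : ℝ} (h : ∀ i j, dist (u i) (v j) ≤ c) : Wass (emp u) (emp v) ≤ c := by
  haveI := emp_prob hn u
  haveI := emp_prob hm v
  have hfst : ((emp u).prod (emp v)).map Prod.fst = emp u := by
    rw [Measure.map_fst_prod]; simp
  have hsnd : ((emp u).prod (emp v)).map Prod.snd = emp v := by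
    rw [Measure.map_snd_prod]; simp
  have hkey := integrable_dist_coupling u v hfst hsnd
    (continuous_dist (α := Euc k)) (fun p => dist_nonneg) (c := c) (fun i j => h i j)
  exact le_trans (csInf_le (wass_bddBelow _ _) (prod_coupling_mem (emp u) (emp v))) hkey.2

lemma wass_emp_nonempty (hn : 1 ≤ n) (hm : 1 ≤ m) (u : Fin n → Euc k) (v : Fin m → Euc k) :
    Set.Nonempty { c : ℝ | ∃ π : Measure (Euc k × Euc k), IsProbabilityMeasure π ∧
      π.map Prod.fst = emp u ∧ π.map Prod.snd = emp v ∧ c = ∫ p, dist p.1 p.2 ∂π } := by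
  haveI := emp_prob hn u
  haveI := emp_prob hm v
  exact ⟨_, prod_coupling_mem (emp u) (emp v)⟩

lemma wass_transfer (hn : 1 ≤ n) (hm : 1 ≤ m) (u : Fin n → Euc k) (v : Fin m → Euc k)
    {S : Matrix (Fin k) (Fin k) ℝ} {L : ℝ} (hL : 1 ≤ L)
    (hS : ∀ a b : Euc k, dist (mve S a) (mve S b) ≤ L * dist a b) :
    Wass (emp (mve S ∘ u)) (emp (mve S ∘ v)) ≤ L * Wass (emp u) (emp v) := by
  have hL0 : 0 < L := lt_of_lt_of_le one_pos hL
  have hmeas : Measurable (mve S) := (continuous_mve S).measurable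
  have hPm : Measurable (Prod.map (mve S) (mve S)) := hmeas.prodMap hmeas
  have key : ∀ c ∈ { c : ℝ | ∃ π : Measure (Euc k × Euc k), IsProbabilityMeasure π ∧
      π.map Prod.fst = emp u ∧ π.map Prod.snd = emp v ∧ c = ∫ p, dist p.1 p.2 ∂π },
      Wass (emp (mve S ∘ u)) (emp (mve S ∘ v)) ≤ L * c := by
    rintro c ⟨π, hπ, h1, h2, rfl⟩
    haveI := hπ
    set π' := π.map (Prod.map (mve S) (mve S)) with hπ'
    haveI : IsProbabilityMeasure π' := Measure.isProbabilityMeasure_map hPm.aemeasurable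
    have hfst' : π'.map Prod.fst = emp (mve S ∘ u) := by
      rw [hπ', Measure.map_map measurable_fst hPm]
      have : (Prod.fst ∘ Prod.map (mve S) (mve S)) = mve S ∘ Prod.fst := rfl
      rw [this, ← Measure.map_map hmeas measurable_fst, h1, emp_map u hmeas]
    have hsnd' : π'.map Prod.snd = emp (mve S ∘ v) := by
      rw [hπ', Measure.map_map measurable_snd hPm]
      have : (Prod.snd ∘ Prod.map (mve S) (mve S)) = mve S ∘ Prod.snd := rfl
      rw [this, ← Measure.map_map hmeas measurable_snd, h2, emp_map v hmeas]
    have hcost : ∫ p, dist p.1 p.2 ∂π' =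
        ∫ p : Euc k × Euc k, dist (mve S p.1) (mve S p.2) ∂π := by
      rw [hπ', integral_map hPm.aemeasurable
        (continuous_dist (α := Euc k)).aestronglyMeasurable]
      rfl
    have hle1 : Wass (emp (mve S ∘ u)) (emp (mve S ∘ v)) ≤ ∫ p, dist p.1 p.2 ∂π' :=
      csInf_le (wass_bddBelow _ _) ⟨π', inferInstance, hfst', hsnd', rfl⟩
    set Dm := ∑ i', ∑ j', dist (u i') (v j') with hDm
    have hgd : Continuous fun p : Euc k × Euc k => dist (mve S p.1) (mve S p.2) :=
      Continuous.dist ((continuous_mve S).comp continuous_fst)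
        ((continuous_mve S).comp continuous_snd)
    have hint1 := integrable_dist_coupling u v h1 h2 hgd (fun p => dist_nonneg)
      (c := L * Dm) (fun i j => le_trans (hS (u i) (v j))
        (mul_le_mul_of_nonneg_left (pair_le_sum u v i j) (le_of_lt hL0)))
    have hint2 := integrable_dist_coupling u v h1 h2 (continuous_dist (α := Euc k))
      (fun p => dist_nonneg) (c := Dm) (fun i j => pair_le_sum u v i j)
    have hle2 : ∫ p : Euc k × Euc k, dist (mve S p.1) (mve S p.2) ∂π ≤
        ∫ p : Euc k × Euc k, L * dist p.1 p.2 ∂π := by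
      apply integral_mono hint1.1 (hint2.1.const_mul L)
      intro p
      exact hS p.1 p.2
    have hle3 : ∫ p : Euc k × Euc k, L * dist p.1 p.2 ∂π =
        L * ∫ p, dist p.1 p.2 ∂π := integral_const_mul L _
    calc Wass (emp (mve S ∘ u)) (emp (mve S ∘ v)) ≤ ∫ p, dist p.1 p.2 ∂π' := hle1
      _ = ∫ p : Euc k × Euc k, dist (mve S p.1) (mve S p.2) ∂π := hcost
      _ ≤ L * ∫ p, dist p.1 p.2 ∂π := by rw [← hle3]; exact hle2
  rw [Wass, mul_comm, ← div_le_iff₀ hL0]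
  apply le_csInf (wass_emp_nonempty hn hm u v)
  intro c hc
  rw [div_le_iff₀ hL0, mul_comm]
  exact key c hc

end WassMain

end Stmt1Aux

namespace Stmt1Aux
open Matrix
section FobjAux
variable {d k n m : ℕ}

lemma measurable_proj {d k : ℕ} (A : Matrix (Fin d) (Fin k) ℝ) : Measurable (proj A) := by
  rw [proj_eq_mve]; exact (continuous_mve _).measurable

lemma fobj_eq (x : Fin n → Euc d) (y : Fin m → Euc d) (A : Matrix (Fin d) (Fin k) ℝ) :
    Fobj x y A = Wass (emp (proj A ∘ x)) (emp (proj A ∘ y)) := by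
  rw [Fobj, emp_map x (measurable_proj A), emp_map y (measurable_proj A)]

lemma fobj_nonneg (x : Fin n → Euc d) (y : Fin m → Euc d) (A : Matrix (Fin d) (Fin k) ℝ) :
    0 ≤ Fobj x y A := wass_nonneg _ _

lemma fobj_le_bound (hn : 1 ≤ n) (hm : 1 ≤ m) (x : Fin n → Euc d) (y : Fin m → Euc d)
    {D : ℝ} (hD : ∀ i j, dist (x i) (y j) ≤ D) (A : Matrix (Fin d) (Fin k) ℝ) :
    Fobj x y A ≤ Real.sqrt (∑ i, ∑ j, A i j ^ 2) * D := by
  rw [fobj_eq]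
  apply wass_emp_le_bound hn hm
  intro i j
  simp only [Function.comp_apply]
  have h1 : dist (proj A (x i)) (proj A (y j)) = ‖mve A.transpose (x i - y j)‖ := by
    rw [dist_eq_norm, proj_eq_mve, mve_sub]
  have h2 : Real.sqrt (∑ i', ∑ j', A.transpose i' j' ^ 2) =
      Real.sqrt (∑ i', ∑ j', A i' j' ^ 2) := by
    congr 1
    rw [Finset.sum_comm]
    simp [Matrix.transpose_apply]
  calc dist (proj A (x i)) (proj A (y j)) = ‖mve A.transpose (x i - y j)‖ := h1
    _ ≤ Real.sqrt (∑ i', ∑ j', A.transpose i' j' ^ 2) * ‖x i - y j‖ := norm_mve_le _ _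
    _ = Real.sqrt (∑ i', ∑ j', A i' j' ^ 2) * dist (x i) (y j) := by
        rw [h2, dist_eq_norm]
    _ ≤ Real.sqrt (∑ i', ∑ j', A i' j' ^ 2) * D :=
        mul_le_mul_of_nonneg_left (hD i j) (Real.sqrt_nonneg _)

lemma fobj_polar (hn : 1 ≤ n) (hm : 1 ≤ m) (x : Fin n → Euc d) (y : Fin m → Euc d)
    {A : Matrix (Fin d) (Fin k) ℝ} (ht : frobNorm (A.transpose * A - 1) < 1) :
    ∃ B : Matrix (Fin d) (Fin k) ℝ, B.transpose * B = 1 ∧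
      Fobj x y A ≤ (1 + frobNorm (A.transpose * A - 1)) * Fobj x y B := by
  have hG : (A.transpose * A).PosSemidef := by
    have := Matrix.posSemidef_conjTranspose_mul_self A
    rwa [Matrix.conjTranspose_eq_transpose_of_trivial] at this
  have hGd : (A.transpose * A).PosDef := posDef_of_frob_lt_one hG ht
  obtain ⟨S, hSS, hSpsd⟩ : ∃ S : Matrix (Fin k) (Fin k) ℝ,
      S * S = A.transpose * A ∧ S.PosSemidef := by
    open scoped MatrixOrder in
    exact ⟨CFC.sqrt (A.transpose * A), CFC.sqrt_mul_sqrt_self _ hG.nonneg,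
      (CFC.sqrt_nonneg _).posSemidef⟩
  have hdet : IsUnit S.det := by
    apply isUnit_iff_ne_zero.mpr
    intro h
    have h2 : S.det * S.det = (A.transpose * A).det := by rw [← Matrix.det_mul, hSS]
    rw [h, mul_zero] at h2
    exact absurd h2.symm (ne_of_gt hGd.det_pos)
  set B := A * S⁻¹ with hBdef
  have hSt : S.transpose = S := by
    rw [← Matrix.conjTranspose_eq_transpose_of_trivial]; exact hSpsd.1
  have hBt : B.transpose = S⁻¹ * A.transpose := by
    rw [hBdef, Matrix.transpose_mul, Matrix.transpose_nonsing_inv, hSt]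
  have hBB : B.transpose * B = 1 := by
    rw [hBt, hBdef]
    have : S⁻¹ * A.transpose * (A * S⁻¹) = S⁻¹ * (A.transpose * A) * S⁻¹ := by
      simp only [Matrix.mul_assoc]
    rw [this, ← hSS]
    have : S⁻¹ * (S * S) * S⁻¹ = (S⁻¹ * S) * (S * S⁻¹) := by
      simp only [Matrix.mul_assoc]
    rw [this, Matrix.nonsing_inv_mul _ hdet, Matrix.mul_nonsing_inv _ hdet, one_mul]
  have hAT : A.transpose = S * B.transpose := by
    rw [hBt, ← Matrix.mul_assoc, Matrix.mul_nonsing_inv _ hdet, Matrix.one_mul]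
  have hproj : proj A = mve S ∘ proj B := by
    rw [proj_eq_mve, proj_eq_mve, hAT]
    funext z
    exact (mve_mve S B.transpose z).symm
  refine ⟨B, hBB, ?_⟩
  have hL : (1:ℝ) ≤ 1 + frobNorm (A.transpose * A - 1) := by
    linarith [frobNorm_nonneg (A.transpose * A - 1)]
  have hlip : ∀ a b : Euc k, dist (mve S a) (mve S b) ≤
      (1 + frobNorm (A.transpose * A - 1)) * dist a b := by
    intro a b
    have := mve_lip hSpsd a b
    rwa [hSS] at this
  calc Fobj x y A = Wass (emp (mve S ∘ (proj B ∘ x))) (emp (mve S ∘ (proj B ∘ y))) := by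
        rw [fobj_eq, hproj]; rfl
    _ ≤ (1 + frobNorm (A.transpose * A - 1)) *
        Wass (emp (proj B ∘ x)) (emp (proj B ∘ y)) := wass_transfer hn hm _ _ hL hlip
    _ = (1 + frobNorm (A.transpose * A - 1)) * Fobj x y B := by rw [← fobj_eq]

end FobjAux

end Stmt1Aux

set_option maxHeartbeats 1000000 in
/-- There are `C > 0` and `λ₀ > 0` such that for all `λ ≥ λ₀`:
(i) `|F* - F*_λ| ≤ C/λ` where `F* = max{F(A) : AᵀA = I}` and `F*_λ = sup_A F_λ(A)`, and
(ii) every maximizer `A` of `F_λ` satisfies `‖AᵀA - I‖_F ≤ C/λ`. -/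
theorem stmt_1 {d : ℕ} (n m k : ℕ) (hn : 1 ≤ n) (hm : 1 ≤ m) (hk : 1 ≤ k) (hkd : k ≤ d)
    (x : Fin n → Euc d) (y : Fin m → Euc d) :
    ∃ C > (0 : ℝ), ∃ lam₀ > (0 : ℝ), ∀ lam ≥ lam₀,
      |sSup { c : ℝ | ∃ A : Matrix (Fin d) (Fin k) ℝ, A.transpose * A = 1 ∧ c = Fobj x y A }
          - ⨆ A : Matrix (Fin d) (Fin k) ℝ, Fpen x y lam A| ≤ C / lam ∧
      ∀ A : Matrix (Fin d) (Fin k) ℝ,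
        (∀ B : Matrix (Fin d) (Fin k) ℝ, Fpen x y lam B ≤ Fpen x y lam A) →
        frobNorm (A.transpose * A - 1) ≤ C / lam := by
  classical
  set D : ℝ := 1 + ∑ i, ∑ j, dist (x i) (y j) with hDdef
  have hD1 : (1:ℝ) ≤ D := by
    have : (0:ℝ) ≤ ∑ i, ∑ j, dist (x i) (y j) :=
      Finset.sum_nonneg fun _ _ => Finset.sum_nonneg fun _ _ => dist_nonneg
    simp only [hDdef]; linarith
  have hD : ∀ i j, dist (x i) (y j) ≤ D := by
    intro i j
    have := Stmt1Aux.pair_le_sum x y i j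
    simp only [hDdef]; linarith
  set M : ℝ := Real.sqrt k * D with hMdef
  have hsk1 : (1:ℝ) ≤ Real.sqrt k := by
    rw [show (1:ℝ) = Real.sqrt 1 by rw [Real.sqrt_one]]
    exact Real.sqrt_le_sqrt (by exact_mod_cast hk)
  have hM1 : (1:ℝ) ≤ M := by
    simp only [hMdef]; nlinarith
  -- abbreviation for penalty size
  set t : Matrix (Fin d) (Fin k) ℝ → ℝ := fun A => frobNorm (A.transpose * A - 1) with htdef
  have ht0 : ∀ A, 0 ≤ t A := fun A => Stmt1Aux.frobNorm_nonneg _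
  have key1 : ∀ A : Matrix (Fin d) (Fin k) ℝ, Fobj x y A ≤ M * (1 + t A) := by
    intro A
    have h1 := Stmt1Aux.fobj_le_bound hn hm x y hD A
    have h2 := Stmt1Aux.frobA_le hk A
    have h3 : Real.sqrt (∑ i, ∑ j, A i j ^ 2) * D ≤
        (Real.sqrt k * (1 + t A)) * D :=
      mul_le_mul_of_nonneg_right h2 (by linarith)
    calc Fobj x y A ≤ Real.sqrt (∑ i, ∑ j, A i j ^ 2) * D := h1
      _ ≤ (Real.sqrt k * (1 + t A)) * D := h3
      _ = M * (1 + t A) := by simp only [hMdef]; ring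
  have hfrob0 : frobNorm (0 : Matrix (Fin k) (Fin k) ℝ) = 0 := by
    simp [frobNorm]
  have horthT : ∀ A : Matrix (Fin d) (Fin k) ℝ, A.transpose * A = 1 → t A = 0 := by
    intro A hA
    simp only [htdef, hA, sub_self, hfrob0]
  have pen0 : ∀ (lam : ℝ) (B : Matrix (Fin d) (Fin k) ℝ), B.transpose * B = 1 →
      Fpen x y lam B = Fobj x y B := by
    intro lam B hB
    have : frobNorm (B.transpose * B - 1) = 0 := horthT B hB
    simp [Fpen, this]
  obtain ⟨B₀, hB0⟩ := Stmt1Aux.exists_orth (k := k) (d := d) hkd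
  set Sset := { c : ℝ | ∃ A : Matrix (Fin d) (Fin k) ℝ, A.transpose * A = 1 ∧
      c = Fobj x y A } with hSsetdef
  have hSne : Sset.Nonempty := ⟨Fobj x y B₀, B₀, hB0, rfl⟩
  have hbdd : BddAbove Sset := by
    refine ⟨M, ?_⟩
    rintro c ⟨A, hA, rfl⟩
    have := key1 A
    rw [horthT A hA] at this
    simpa using this
  set Fstar := sSup Sset with hFstardef
  have hFs0 : 0 ≤ Fstar :=
    le_trans (Stmt1Aux.fobj_nonneg x y B₀) (le_csSup hbdd ⟨B₀, hB0, rfl⟩)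
  have hFsM : Fstar ≤ M := by
    apply csSup_le hSne
    rintro c ⟨A, hA, rfl⟩
    have := key1 A
    rw [horthT A hA] at this
    simpa using this
  have hFobjle : ∀ B : Matrix (Fin d) (Fin k) ℝ, B.transpose * B = 1 →
      Fobj x y B ≤ Fstar := fun B hB => le_csSup hbdd ⟨B, hB, rfl⟩
  -- main penalized upper bound
  have penle : ∀ lam, 8 * M ≤ lam → ∀ A : Matrix (Fin d) (Fin k) ℝ,
      Fpen x y lam A ≤ Fstar + M ^ 2 / (2 * lam) := by
    intro lam hlam A
    have hlampos : (0:ℝ) < lam := by nlinarith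
    have htA := ht0 A
    by_cases hcase : t A < 1
    · obtain ⟨B, hBB, hle⟩ := Stmt1Aux.fobj_polar hn hm x y hcase
      have hFB := hFobjle B hBB
      have h1 : Fobj x y A ≤ (1 + t A) * Fstar := by
        calc Fobj x y A ≤ (1 + t A) * Fobj x y B := hle
          _ ≤ (1 + t A) * Fstar := mul_le_mul_of_nonneg_left hFB (by linarith)
      have h2 : t A * Fstar - lam / 2 * t A ^ 2 ≤ M ^ 2 / (2 * lam) := by
        rw [le_div_iff₀ (by linarith : (0:ℝ) < 2 * lam)]
        have h3 : t A * Fstar ≤ t A * M := mul_le_mul_of_nonneg_left hFsM htA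
        nlinarith [sq_nonneg (lam * t A - M)]
      have : Fpen x y lam A = Fobj x y A - lam / 2 * t A ^ 2 := rfl
      rw [this]
      linarith
    · push_neg at hcase
      have h1 := key1 A
      have h2 : Fpen x y lam A = Fobj x y A - lam / 2 * t A ^ 2 := rfl
      have h3 : M * (1 + t A) - lam / 2 * t A ^ 2 ≤ 0 := by
        nlinarith [mul_le_mul_of_nonneg_left hcase (le_trans zero_le_one hM1)]
      have h4 : 0 ≤ M ^ 2 / (2 * lam) := by positivity
      rw [h2]
      linarith
  refine ⟨2 * M ^ 2, by nlinarith, 8 * M, by nlinarith, ?_⟩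
  intro lam hlam
  have hlampos : (0:ℝ) < lam := by nlinarith
  have hpenbdd : BddAbove (Set.range (fun A : Matrix (Fin d) (Fin k) ℝ => Fpen x y lam A)) := by
    refine ⟨Fstar + M ^ 2 / (2 * lam), ?_⟩
    rintro c ⟨A, rfl⟩
    exact penle lam hlam A
  have hlow : Fstar ≤ ⨆ A : Matrix (Fin d) (Fin k) ℝ, Fpen x y lam A := by
    apply csSup_le hSne
    rintro c ⟨A, hA, rfl⟩
    rw [← pen0 lam A hA]
    exact le_ciSup hpenbdd A
  have hup : (⨆ A : Matrix (Fin d) (Fin k) ℝ, Fpen x y lam A) ≤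
      Fstar + M ^ 2 / (2 * lam) := ciSup_le (penle lam hlam)
  have hdivle : M ^ 2 / (2 * lam) ≤ 2 * M ^ 2 / lam := by
    rw [div_le_div_iff₀ (by linarith) hlampos]
    nlinarith
  constructor
  · rw [abs_le]
    constructor
    · have : (0:ℝ) ≤ 2 * M ^ 2 / lam := by positivity
      linarith
    · linarith
  · intro A hmax
    have hge : 0 ≤ Fpen x y lam A := by
      have h1 : Fpen x y lam B₀ = Fobj x y B₀ := pen0 lam B₀ hB0
      have h2 := hmax B₀
      have h3 := Stmt1Aux.fobj_nonneg x y B₀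
      linarith
    have htA := ht0 A
    have hcase : t A < 1 := by
      by_contra hcon
      push_neg at hcon
      have h1 := key1 A
      have h2 : Fpen x y lam A = Fobj x y A - lam / 2 * t A ^ 2 := rfl
      have h3 : M * (1 + t A) - lam / 2 * t A ^ 2 ≤ -2 * M := by
        nlinarith [mul_le_mul_of_nonneg_left hcon (le_trans zero_le_one hM1)]
      have : Fpen x y lam A ≤ -2 * M := by rw [h2]; linarith
      linarith
    obtain ⟨B, hBB, hle⟩ := Stmt1Aux.fobj_polar hn hm x y hcase
    have hFB := hFobjle B hBB
    have hFstarle : Fstar ≤ Fpen x y lam A := by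
      apply csSup_le hSne
      rintro c ⟨B', hB', rfl⟩
      rw [← pen0 lam B' hB']
      exact hmax B'
    have hpen : Fpen x y lam A = Fobj x y A - lam / 2 * t A ^ 2 := rfl
    have hchain : lam / 2 * t A ^ 2 ≤ t A * M := by
      have h1 : Fobj x y A ≤ Fstar + t A * M := by
        calc Fobj x y A ≤ (1 + t A) * Fobj x y B := hle
          _ ≤ (1 + t A) * Fstar := mul_le_mul_of_nonneg_left hFB (by linarith)
          _ ≤ Fstar + t A * M := by nlinarith [mul_le_mul_of_nonneg_left hFsM htA]
      rw [hpen] at hFstarle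
      linarith
    show t A ≤ 2 * M ^ 2 / lam
    rw [le_div_iff₀ hlampos]
    rcases eq_or_lt_of_le htA with heq | hpos
    · rw [← heq]
      nlinarith
    · have h2 : lam * t A ≤ 2 * M := by
        have := mul_pos hpos hpos
        nlinarith
      nlinarith
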